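/- For every μ ∈ ℂ with μ ≠ 0, let F_μ = (x₀²x₁ + x₁²x₂ + x₂²x₀ − 3x₀x₁x₂)² + μ·x₀x₁x₂(x₀−x₁)(x₁−x₂)(x₂−x₀) ∈ ℂ[x₀,x₁,x₂]. Then F_μ and all of its partial derivatives of order 1 and 2 vanish at the point (1,1,1), and at least one partial derivative of F_μ of order 3 does not vanish at (1,1,1); that is, (1:1:1) is a point of multiplicity exactly 3 of the sextic curve {F_μ = 0} ⊂ ℙ²(ℂ). -/

import Mathlib

open MvPolynomial

/-- The family of homogeneous sextics
`F_μ = (x₀²x₁ + x₁²x₂ + x₂²x₀ − 3x₀x₁x₂)² + μ·x₀x₁x₂(x₀−x₁)(x₁−x₂)(x₂−x₀)`. -/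
noncomputable def Fmu (μ : ℂ) : MvPolynomial (Fin 3) ℂ :=
  (X 0 ^ 2 * X 1 + X 1 ^ 2 * X 2 + X 2 ^ 2 * X 0 - 3 * (X 0 * X 1 * X 2)) ^ 2 +
    C μ * (X 0 * X 1 * X 2 * (X 0 - X 1) * (X 1 - X 2) * (X 2 - X 0))

/-!
With `𝔪` the ideal of polynomials vanishing at `p = (1,1,1)`, a derivation maps `𝔪ⁿ⁺¹` into `𝔪ⁿ`,
so partial derivatives of order `< n` of an element of `𝔪ⁿ` vanish at `p`. Writing
`F_μ = G² + μ·x₀x₁x₂·L` with `L = (x₀−x₁)(x₁−x₂)(x₂−x₀)`, the cubic `G` lies in `𝔪²` and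
`x₀x₁x₂ − 1` lies in `𝔪`, so `F_μ ≡ μ·L (mod 𝔪⁴)` with `L ∈ 𝔪³`. Hence `F_μ ∈ 𝔪³`, and the third
derivatives of `F_μ` at `p` are those of the cubic form `μ·L`, among them `∂₁∂₀∂₀(μ·L) = −2μ`.
-/

theorem Derivation.apply_mem_pow_of_mem_pow_succ {R A : Type*} [CommSemiring R] [CommSemiring A]
    [Algebra R A] (D : Derivation R A A) (I : Ideal A) :
    ∀ n : ℕ, ∀ x ∈ I ^ (n + 1), D x ∈ I ^ n
  | 0, _, _ => by simp
  | n + 1, x, hx => by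
    rw [pow_succ] at hx
    induction hx using Submodule.mul_induction_on' with
    | mem_mul_mem a ha b hb =>
      rw [D.leibniz, smul_eq_mul, smul_eq_mul]
      refine add_mem (Ideal.mul_mem_right _ _ ha) ?_
      rw [pow_succ']
      exact Ideal.mul_mem_mul hb (D.apply_mem_pow_of_mem_pow_succ I n a ha)
    | add x _ y _ hx hy => rw [map_add]; exact add_mem hx hy

local notation "𝔪[" R "]" => RingHom.ker (MvPolynomial.eval (![1, 1, 1] : Fin 3 → R))

namespace MvPolynomial

variable {R σ : Type*} [CommRing R]

theorem eval_eq_zero_of_mem_ker_pow {p : σ → R} {n : ℕ} (hn : n ≠ 0) {F : MvPolynomial σ R}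
    (hF : F ∈ RingHom.ker (eval p) ^ n) : eval p F = 0 :=
  Ideal.pow_le_self hn hF

variable (R)

noncomputable def cyclicCubic : MvPolynomial (Fin 3) R :=
  X 0 ^ 2 * X 1 + X 1 ^ 2 * X 2 + X 2 ^ 2 * X 0 - 3 * (X 0 * X 1 * X 2)

noncomputable def cyclicDifference : MvPolynomial (Fin 3) R :=
  (X 0 - X 1) * (X 1 - X 2) * (X 2 - X 0)

theorem X_sub_X_mem_ker (i j : Fin 3) : X i - X j ∈ 𝔪[R] := by
  fin_cases i <;> fin_cases j <;> simp [RingHom.mem_ker]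

theorem X_mul_X_sub_one_mem_ker (i j : Fin 3) : X i * X j - 1 ∈ 𝔪[R] := by
  fin_cases i <;> fin_cases j <;> simp [RingHom.mem_ker]

theorem cyclicCubic_mem_sq : cyclicCubic R ∈ 𝔪[R] ^ 2 := by
  have hG : cyclicCubic R = (X 0 * X 1 - 1) * (X 0 - X 2) + (X 1 * X 2 - 1) * (X 1 - X 0)
      + (X 2 * X 0 - 1) * (X 2 - X 1) := by
    rw [cyclicCubic]; ring
  rw [hG, sq]
  refine add_mem (add_mem ?_ ?_) ?_ <;>
    exact Ideal.mul_mem_mul (X_mul_X_sub_one_mem_ker R _ _) (X_sub_X_mem_ker R _ _)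

theorem cyclicDifference_mem_pow_three : cyclicDifference R ∈ 𝔪[R] ^ 3 := by
  rw [cyclicDifference, pow_succ, sq]
  exact Ideal.mul_mem_mul (Ideal.mul_mem_mul (X_sub_X_mem_ker R _ _) (X_sub_X_mem_ker R _ _))
    (X_sub_X_mem_ker R _ _)

theorem pderiv_one_pderiv_zero_pderiv_zero_cyclicDifference :
    pderiv 1 (pderiv 0 (pderiv 0 (cyclicDifference R))) = -2 := by
  simp [cyclicDifference]
  ring

end MvPolynomial

theorem Fmu_eq (μ : ℂ) :
    Fmu μ = cyclicCubic ℂ ^ 2 + C μ * (X 0 * X 1 * X 2 * cyclicDifference ℂ) := by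
  rw [Fmu, cyclicCubic, cyclicDifference]; ring

theorem Fmu_sub_mem_pow_four (μ : ℂ) : Fmu μ - C μ * cyclicDifference ℂ ∈ 𝔪[ℂ] ^ 4 := by
  have hprod : X 0 * X 1 * X 2 - 1 ∈ 𝔪[ℂ] := by simp [RingHom.mem_ker]
  rw [Fmu_eq, add_sub_assoc, ← mul_sub, ← sub_one_mul]
  refine add_mem ?_ (Ideal.mul_mem_left _ _ ?_)
  · rw [show 4 = 2 * 2 from rfl, pow_mul]
    exact Ideal.pow_mem_pow (cyclicCubic_mem_sq ℂ) 2
  · rw [pow_succ']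
    exact Ideal.mul_mem_mul hprod (cyclicDifference_mem_pow_three ℂ)

theorem Fmu_mem_pow_three (μ : ℂ) : Fmu μ ∈ 𝔪[ℂ] ^ 3 := by
  rw [← sub_add_cancel (Fmu μ) (C μ * cyclicDifference ℂ)]
  exact add_mem (Ideal.pow_le_pow_right (by norm_num) (Fmu_sub_mem_pow_four μ))
    (Ideal.mul_mem_left _ _ (cyclicDifference_mem_pow_three ℂ))

/-- For every `μ ≠ 0`, the sextic `F_μ` and all of its partial derivatives of order 1 and 2
vanish at `(1,1,1)`, while some third-order partial derivative does not vanish there: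
`(1:1:1)` is a point of multiplicity exactly 3 of the curve `{F_μ = 0}`. -/
theorem multiplicity_three_at_111 (μ : ℂ) (hμ : μ ≠ 0) :
    MvPolynomial.eval ![1, 1, 1] (Fmu μ) = 0 ∧
    (∀ i : Fin 3, MvPolynomial.eval ![1, 1, 1] (MvPolynomial.pderiv i (Fmu μ)) = 0) ∧
    (∀ i j : Fin 3,
      MvPolynomial.eval ![1, 1, 1] (MvPolynomial.pderiv j (MvPolynomial.pderiv i (Fmu μ))) = 0) ∧
    (∃ i j k : Fin 3,
      MvPolynomial.eval ![1, 1, 1]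
        (MvPolynomial.pderiv k (MvPolynomial.pderiv j (MvPolynomial.pderiv i (Fmu μ)))) ≠ 0) := by
  have hd {n : ℕ} (i : Fin 3) {F : MvPolynomial (Fin 3) ℂ} (hF : F ∈ 𝔪[ℂ] ^ (n + 1)) :
      pderiv i F ∈ 𝔪[ℂ] ^ n :=
    (pderiv i).apply_mem_pow_of_mem_pow_succ _ n F hF
  have hF := Fmu_mem_pow_three μ
  refine ⟨eval_eq_zero_of_mem_ker_pow (by norm_num) hF,
    fun i => eval_eq_zero_of_mem_ker_pow (by norm_num) (hd i hF),
    fun i j => eval_eq_zero_of_mem_ker_pow (by norm_num) (hd j (hd i hF)), 0, 0, 1, ?_⟩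
  have hcubic := eval_eq_zero_of_mem_ker_pow one_ne_zero
    (hd 1 (hd 0 (hd 0 (Fmu_sub_mem_pow_four μ))))
  rw [C_mul', map_sub, map_sub, map_sub, Derivation.map_smul, Derivation.map_smul,
    Derivation.map_smul, pderiv_one_pderiv_zero_pderiv_zero_cyclicDifference, map_sub,
    sub_eq_zero] at hcubic
  rw [hcubic]
  simpa using hμ
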